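/- Let E be the Euclidean space ℝ³ with the standard inner product ⟨·,·⟩ and norm ‖·‖. Let n ∈ E be a unit vector and let m ∈ E be a vector whose projection p := m − ⟨m, n⟩·n onto the hyperplane orthogonal to n is nonzero. Let d ≥ 0 and let q, x ∈ E satisfy ⟨m, x − q⟩ ≤ 0. Then every point y ∈ E with ⟨n, y − x⟩ = 0 and ‖y − x‖ ≤ d/2 satisfies ⟨m, y − (q + (d/2)·(p/‖p‖))⟩ ≤ 0. (That is, the closed disk of radius d/2 centered at x within the hyperplane through x orthogonal to n is entirely contained in the non-positive halfspace of the surface with normal m after its base point q is shifted by (d/2)·p/‖p‖.) -/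

import Mathlib

open RealInnerProductSpace

/-! For `y - x ⟂ n` the component of `m` along `n` does not see `y - x`, so
`⟪m, y - x⟫ = ⟪p, y - x⟫ ≤ ‖p‖ ‖y - x‖ ≤ ‖p‖ d/2` by Cauchy–Schwarz. Since `p ⟂ n` we have
`⟪m, p⟫ = ‖p‖²`, so the shift `(d/2) • p/‖p‖` raises `⟪m, ·⟫` at the base point by exactly
`‖p‖ d/2`, which absorbs the displacement from `x` to `y`. -/

section

variable {E : Type*} [NormedAddCommGroup E] [InnerProductSpace ℝ E]

lemma inner_sub_inner_smul_left_of_inner_eq_zero (m : E) {n v : E} (h : ⟪n, v⟫ = 0) :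
    ⟪m - ⟪m, n⟫ • n, v⟫ = ⟪m, v⟫ := by
  rw [inner_sub_left, real_inner_smul_left, h, mul_zero, sub_zero]

lemma inner_sub_inner_smul_right_eq_norm_sq (m : E) {n : E} (hn : ‖n‖ = 1) :
    ⟪m, m - ⟪m, n⟫ • n⟫ = ‖m - ⟪m, n⟫ • n‖ ^ 2 := by
  have hnp : ⟪n, m - ⟪m, n⟫ • n⟫ = 0 := by
    rw [inner_sub_right, real_inner_smul_right, real_inner_self_eq_norm_sq, hn,
      real_inner_comm]
    ring
  rw [← real_inner_self_eq_norm_sq, inner_sub_inner_smul_left_of_inner_eq_zero m hnp]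

lemma inner_smul_inv_norm_smul_of_inner_eq_norm_sq {m p : E} (h : ⟪m, p⟫ = ‖p‖ ^ 2)
    (r : ℝ) : ⟪m, r • (‖p‖⁻¹ • p)⟫ = r * ‖p‖ := by
  rw [real_inner_smul_right, real_inner_smul_right, h]
  rcases eq_or_ne ‖p‖ 0 with hp | hp
  · simp [hp]
  · field_simp

end

theorem stmt2_general
    (n m : EuclideanSpace ℝ (Fin 3)) (hn : ‖n‖ = 1)
    (p : EuclideanSpace ℝ (Fin 3)) (hp : p = m - ⟪m, n⟫ • n)
    (d : ℝ)
    (q x : EuclideanSpace ℝ (Fin 3)) (hqx : ⟪m, x - q⟫ ≤ 0) :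
    ∀ y : EuclideanSpace ℝ (Fin 3), ⟪n, y - x⟫ = 0 → ‖y - x‖ ≤ d / 2 →
      ⟪m, y - (q + (d / 2) • (‖p‖⁻¹ • p))⟫ ≤ 0 := by
  intro y hny hyx
  have hdisk : ⟪m, y - x⟫ ≤ d / 2 * ‖p‖ :=
    calc ⟪m, y - x⟫ = ⟪p, y - x⟫ := by
          rw [hp, inner_sub_inner_smul_left_of_inner_eq_zero m hny]
      _ ≤ ‖p‖ * ‖y - x‖ := real_inner_le_norm p (y - x)
      _ ≤ ‖p‖ * (d / 2) := by gcongr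
      _ = d / 2 * ‖p‖ := mul_comm _ _
  have hshift : ⟪m, (d / 2) • (‖p‖⁻¹ • p)⟫ = d / 2 * ‖p‖ :=
    inner_smul_inv_norm_smul_of_inner_eq_norm_sq
      (hp ▸ inner_sub_inner_smul_right_eq_norm_sq m hn) _
  have hsplit : y - (q + (d / 2) • (‖p‖⁻¹ • p))
      = (y - x) + (x - q) - (d / 2) • (‖p‖⁻¹ • p) := by
    abel
  rw [hsplit, inner_sub_right, inner_add_right]
  linarith

/-- Lemma 1 (second part): the disk of radius `d/2` centered at `x` inside the hyperplane
through `x` orthogonal to `n` is contained in the non-positive halfspace of the surface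
with normal `m` after its base point `q` is shifted by `(d/2) • p/‖p‖`, where `p` is the
projection of `m` onto the hyperplane orthogonal to `n`. -/
theorem stmt2
    (n m : EuclideanSpace ℝ (Fin 3)) (hn : ‖n‖ = 1)
    (p : EuclideanSpace ℝ (Fin 3)) (hp : p = m - ⟪m, n⟫ • n) (hp0 : p ≠ 0)
    (d : ℝ) (hd : 0 ≤ d)
    (q x : EuclideanSpace ℝ (Fin 3)) (hqx : ⟪m, x - q⟫ ≤ 0) :
    ∀ y : EuclideanSpace ℝ (Fin 3), ⟪n, y - x⟫ = 0 → ‖y - x‖ ≤ d / 2 →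
      ⟪m, y - (q + (d / 2) • (‖p‖⁻¹ • p))⟫ ≤ 0 :=
  stmt2_general n m hn p hp d q x hqx
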